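/- Let p be a prime, ℓ ≥ s ≥ 1, and let n₁ < … < n_s be positive integers coprime to p, with positive integers ℓ₁,…,ℓ_s satisfying ℓ₁+⋯+ℓ_s = ℓ, such that the ℓ integers n_i · p^j (1 ≤ i ≤ s, 0 ≤ j ≤ ℓ_i − 1) are pairwise distinct. Write ℓ = q·s + r with 1 ≤ r ≤ s. Then ∑_{i=1}^s n_i·(p^{ℓ_i} − 1)/(p−1) ≥ (s(s+1)/2)·(p^q − 1)/(p−1) + (r(r+1)/2)·p^q. -/

import Mathlib

/-!
Compare the ℓ values `n i * p ^ j` with those of the extremal configuration `n k = k + 1`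
(degrees `j < q` carrying `s` values each, degree `q` carrying `r`) one threshold at a time: a sum
of naturals is determined by how many terms lie below each `x`. In degree `j` the values `≤ x`
come from distinct `n i ≤ x / p ^ j` prime to `p`, so there are at most
`min s (x / p ^ j - x / p ^ j / p)` of them. These bounds telescope to at most `x` in total, and
together with the total count `q * s + r` this forces at most
`∑ j < q, min s (x / p ^ j) + min r (x / p ^ q)` values `≤ x`, which is the extremal count.
-/

open Finset Function

namespace Finset

variable {ι κ : Type*}

theorem sum_eq_sum_range_card_filter_lt (A : Finset ι) (f : ι → ℕ) {X : ℕ}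
    (hX : ∀ a ∈ A, f a ≤ X) : ∑ a ∈ A, f a = ∑ x ∈ range X, #{a ∈ A | x < f a} := by
  calc ∑ a ∈ A, f a = ∑ a ∈ A, #{x ∈ range X | x < f a} := by
        refine sum_congr rfl fun a ha => ?_
        rw [range_eq_Ico, Ico_filter_lt, min_eq_right (hX a ha), Nat.card_Ico, Nat.sub_zero]
    _ = ∑ x ∈ range X, #{a ∈ A | x < f a} := by
        simp only [card_filter]
        exact sum_comm

theorem sum_le_sum_of_card_filter_le {A : Finset ι} {B : Finset κ}
    {f : ι → ℕ} {g : κ → ℕ} (hcard : #B ≤ #A)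
    (h : ∀ x, #{a ∈ A | f a ≤ x} ≤ #{b ∈ B | g b ≤ x}) :
    ∑ b ∈ B, g b ≤ ∑ a ∈ A, f a := by
  set X := ∑ b ∈ B, g b + ∑ a ∈ A, f a
  rw [sum_eq_sum_range_card_filter_lt B g (X := X)
      fun b hb => (single_le_sum (fun _ _ => Nat.zero_le _) hb).trans (Nat.le_add_right _ _),
    sum_eq_sum_range_card_filter_lt A f (X := X)
      fun a ha => (single_le_sum (fun _ _ => Nat.zero_le _) ha).trans (Nat.le_add_left _ _)]
  refine sum_le_sum fun x _ => ?_
  have hA := card_filter_add_card_filter_not (s := A) (fun a => x < f a)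
  have hB := card_filter_add_card_filter_not (s := B) (fun b => x < g b)
  simp only [not_lt] at hA hB
  have := h x
  omega

end Finset

theorem Nat.card_filter_not_dvd_Ioc (y p : ℕ) : #{m ∈ Ioc 0 y | ¬p ∣ m} = y - y / p := by
  have := card_filter_add_card_filter_not (s := Ioc 0 y) (p ∣ ·)
  rw [Nat.Ioc_filter_dvd_card_eq_div, Nat.card_Ioc] at this
  omega

theorem card_filter_le_sub_div {ι : Type*} {p : ℕ} (hp : p ≠ 1) {n : ι → ℕ}
    (hn : Injective n) (hcop : ∀ i, (n i).Coprime p) (A : Finset ι) (y : ℕ) :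
    #{i ∈ A | n i ≤ y} ≤ y - y / p := by
  rw [← Nat.card_filter_not_dvd_Ioc]
  refine card_le_card_of_injOn n (fun i hi => ?_) hn.injOn
  simp only [coe_filter, Set.mem_ofPred_eq, mem_Ioc] at hi ⊢
  refine ⟨⟨Nat.pos_of_ne_zero fun h0 => hp ?_, hi.2⟩, fun hdvd => hp ?_⟩
  · simpa [h0] using hcop i
  · exact (hcop i).symm.eq_one_of_dvd hdvd

theorem Nat.sum_range_sub_div_le (p x B : ℕ) :
    ∑ j ∈ range B, (x / p ^ j - x / p ^ j / p) ≤ x := by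
  induction B generalizing x with
  | zero => simp
  | succ B ih =>
    rw [sum_range_succ']
    simp only [pow_succ', ← Nat.div_div_eq_div_mul, pow_zero, Nat.div_one]
    have := ih (x / p)
    have := Nat.div_le_self x p
    omega

theorem Nat.min_sum_min_sub_div_le (p s r q x B : ℕ) :
    min (q * s + r) (∑ j ∈ range B, min s (x / p ^ j - x / p ^ j / p))
      ≤ ∑ j ∈ range q, min s (x / p ^ j) + min r (x / p ^ q) := by
  have hU (x B : ℕ) : ∑ j ∈ range B, min s (x / p ^ j - x / p ^ j / p) ≤ x :=
    (sum_le_sum fun j _ => min_le_right _ _).trans (Nat.sum_range_sub_div_le p x B)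
  induction q generalizing x B with
  | zero =>
    have := hU x B
    simp only [zero_mul, zero_add, range_zero, sum_empty, pow_zero, Nat.div_one]
    omega
  | succ q ih =>
    cases B with
    | zero => simp
    | succ B =>
      rw [sum_range_succ', sum_range_succ']
      simp only [pow_succ', ← Nat.div_div_eq_div_mul, pow_zero, Nat.div_one]
      have := ih (x / p) B
      have := hU (x / p) B
      have := Nat.div_le_self x p
      rcases Nat.eq_zero_or_pos q with rfl | hq
      · simp only [zero_mul, zero_add, range_zero, sum_empty, pow_zero, Nat.div_one] at *
        omega
      · have := Nat.le_mul_of_pos_left s hq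
        rw [add_one_mul]
        omega

section SupportMap

variable {ι : Type*} [Fintype ι] {p : ℕ} {n : ι → ℕ}

theorem card_filter_mul_pow_le (hp : 1 < p) (hn : Injective n) (hcop : ∀ i, (n i).Coprime p)
    (j x : ℕ) :
    #{i | n i * p ^ j ≤ x} ≤ min (Fintype.card ι) (x / p ^ j - x / p ^ j / p) := by
  simp only [← Nat.le_div_iff_mul_le (pow_pos (zero_lt_one.trans hp) j)]
  exact le_min (card_filter_le _ _) (card_filter_le_sub_div hp.ne' hn hcop _ _)

theorem card_filter_sigma_mul_pow_le (hp : 1 < p) (hn : Injective n)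
    (hcop : ∀ i, (n i).Coprime p) {L : ι → ℕ} {J : ℕ} (hJ : ∀ i, L i ≤ J) (x : ℕ) :
    #{c ∈ univ.sigma fun i => range (L i) | n c.1 * p ^ c.2 ≤ x}
      ≤ ∑ j ∈ range J, min (Fintype.card ι) (x / p ^ j - x / p ^ j / p) := by
  rw [card_eq_sum_card_fiberwise (f := Sigma.snd) (t := range J) fun c hc => ?_]
  · refine sum_le_sum fun j _ => le_trans ?_ (card_filter_mul_pow_le hp hn hcop j x)
    refine card_le_card_of_injOn Sigma.fst (fun c hc => ?_) fun c hc c' hc' h => ?_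
    · simp only [coe_filter, mem_filter, Set.mem_ofPred_eq] at hc
      simpa [← hc.2] using hc.1.2
    · simp only [coe_filter, mem_filter, Set.mem_ofPred_eq] at hc hc'
      exact Sigma.ext h (heq_of_eq (hc.2.trans hc'.2.symm))
  · simp only [coe_filter, mem_sigma, mem_range, Set.mem_ofPred_eq] at hc
    simpa using hc.1.2.trans_le (hJ c.1)

end SupportMap

theorem Nat.card_filter_range_add_one_mul_le {m : ℕ} (hm : 0 < m) (s x : ℕ) :
    #{k ∈ range s | (k + 1) * m ≤ x} = min s (x / m) := by
  rw [← card_range (min s (x / m))]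
  congr 1
  ext k
  simp only [mem_filter, mem_range, lt_min_iff, ← Nat.add_one_le_iff,
    Nat.le_div_iff_mul_le hm]

theorem Finset.sum_range_succ_ite_lt {M : Type*} [AddCommMonoid M]
    (f : ℕ → ℕ → M) (q s r : ℕ) :
    ∑ j ∈ range (q + 1), f j (if j < q then s else r) = ∑ j ∈ range q, f j s + f q r := by
  rw [sum_range_succ, if_neg (lt_irrefl q)]
  exact congrArg (· + _) (sum_congr rfl fun j hj => by rw [if_pos (mem_range.1 hj)])

section Extremal

variable (s q r : ℕ)

/-- The cells `⟨j, k⟩` of the support map attaining the bound, carrying the values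
`(k + 1) * p ^ j`; note that they are indexed by degree first. -/
def extremalCells : Finset (Σ _ : ℕ, ℕ) :=
  (range (q + 1)).sigma fun j => range (if j < q then s else r)

theorem card_extremalCells : #(extremalCells s q r) = q * s + r := by
  rw [extremalCells, card_sigma]
  simp only [card_range, sum_range_succ_ite_lt (fun _ m => m), sum_const, smul_eq_mul]

theorem sum_extremalCells (p : ℕ) :
    ∑ c ∈ extremalCells s q r, (c.2 + 1) * p ^ c.1
      = (∑ k ∈ range s, (k + 1)) * ∑ j ∈ range q, p ^ j
        + (∑ k ∈ range r, (k + 1)) * p ^ q := by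
  rw [extremalCells, sum_sigma]
  simp only [← sum_mul, sum_range_succ_ite_lt fun j m => (∑ k ∈ range m, (k + 1)) * p ^ j,
    mul_sum]

theorem card_filter_extremalCells {p : ℕ} (hp : 0 < p) (x : ℕ) :
    #{c ∈ extremalCells s q r | (c.2 + 1) * p ^ c.1 ≤ x}
      = ∑ j ∈ range q, min s (x / p ^ j) + min r (x / p ^ q) := by
  rw [card_filter, extremalCells, sum_sigma]
  simp only [← card_filter, Nat.card_filter_range_add_one_mul_le (pow_pos hp _)]
  exact sum_range_succ_ite_lt (fun j m => min m (x / p ^ j)) q s r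

end Extremal

theorem Nat.cast_sum_range_add_one {K : Type*} [Field K] [CharZero K] (m : ℕ) :
    ((∑ k ∈ range m, (k + 1) : ℕ) : K) = m * (m + 1) / 2 := by
  induction m with
  | zero => simp
  | succ m ih =>
    rw [sum_range_succ, Nat.cast_add, ih]
    push_cast
    ring

theorem stmt_7_general (p s ℓ : ℕ) (hp : p.Prime)
    (n : Fin s → ℕ) (hmono : StrictMono n)
    (hcop : ∀ i, Nat.Coprime (n i) p)
    (L : Fin s → ℕ) (hsum : ∑ i, L i = ℓ)
    (q r : ℕ) (hl : ℓ = q * s + r) :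
    ((s : ℚ) * (s + 1) / 2) * (((p : ℚ) ^ q - 1) / (p - 1))
      + ((r : ℚ) * (r + 1) / 2) * (p : ℚ) ^ q
      ≤ ∑ i, (n i : ℚ) * (((p : ℚ) ^ (L i) - 1) / (p - 1)) := by
  have hLℓ (i : Fin s) : L i ≤ ℓ :=
    hsum ▸ single_le_sum (fun _ _ => Nat.zero_le _) (mem_univ i)
  have hcard : #(univ.sigma fun i => range (L i)) = q * s + r := by simp [card_sigma, hsum, hl]
  have key : ∑ c ∈ extremalCells s q r, (c.2 + 1) * p ^ c.1
      ≤ ∑ c ∈ univ.sigma fun i => range (L i), n c.1 * p ^ c.2 := by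
    refine sum_le_sum_of_card_filter_le (by rw [card_extremalCells, hcard]) fun x => ?_
    calc #{c ∈ univ.sigma fun i => range (L i) | n c.1 * p ^ c.2 ≤ x}
        ≤ min (q * s + r) (∑ j ∈ range ℓ, min s (x / p ^ j - x / p ^ j / p)) :=
          le_min (hcard ▸ card_filter_le _ _)
            (by simpa using card_filter_sigma_mul_pow_le hp.one_lt hmono.injective hcop hLℓ x)
      _ ≤ ∑ j ∈ range q, min s (x / p ^ j) + min r (x / p ^ q) :=
          Nat.min_sum_min_sub_div_le p s r q x ℓ
      _ = #{c ∈ extremalCells s q r | (c.2 + 1) * p ^ c.1 ≤ x} :=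
          (card_filter_extremalCells s q r hp.pos x).symm
  simp only [sum_extremalCells, sum_sigma, ← mul_sum] at key
  have hp1 : (p : ℚ) ≠ 1 := by exact_mod_cast hp.ne_one
  simp only [← geom_sum_eq hp1, ← Nat.cast_sum_range_add_one]
  exact_mod_cast key

/-- Proposition `bou`: if the `ℓ` integers `n_i · p^j` (`1 ≤ i ≤ s`, `0 ≤ j < ℓ_i`),
with `n₁ < … < n_s` positive and coprime to `p` and `ℓ₁ + ⋯ + ℓ_s = ℓ`, are pairwise
distinct, and `ℓ = q·s + r` with `1 ≤ r ≤ s`, then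
`∑ n_i (p^{ℓ_i} − 1)/(p−1) ≥ (s(s+1)/2)(p^q − 1)/(p−1) + (r(r+1)/2) p^q`. -/
theorem stmt_7 (p s ℓ : ℕ) (hp : p.Prime) (hs : 1 ≤ s) (hls : s ≤ ℓ)
    (n : Fin s → ℕ) (hmono : StrictMono n)
    (hpos : ∀ i, 0 < n i) (hcop : ∀ i, Nat.Coprime (n i) p)
    (L : Fin s → ℕ) (hL : ∀ i, 1 ≤ L i) (hsum : ∑ i, L i = ℓ)
    (hinj : ∀ i j i' j', j < L i → j' < L i' →
      n i * p ^ j = n i' * p ^ j' → i = i' ∧ j = j')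
    (q r : ℕ) (hl : ℓ = q * s + r) (hr1 : 1 ≤ r) (hrs : r ≤ s) :
    ((s : ℚ) * (s + 1) / 2) * (((p : ℚ) ^ q - 1) / (p - 1))
      + ((r : ℚ) * (r + 1) / 2) * (p : ℚ) ^ q
      ≤ ∑ i, (n i : ℚ) * (((p : ℚ) ^ (L i) - 1) / (p - 1)) :=
  stmt_7_general p s ℓ hp n hmono hcop L hsum q r hl
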